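/- For every n ≥ 2, the (n+3)-ary Boolean relation R = { (x₁,…,xₙ,x,c₀,c₁) ∈ Bool^{n+3} | (x₁ ∨ ⋯ ∨ xₙ) ∧ (x → x₁ ∧ ⋯ ∧ xₙ) ∧ (c₀ = 0) ∧ (c₁ = 1) } is a weak base of the co-clone it generates (this co-clone is IS^n_{00} in Post's lattice): for every finite set Δ of Boolean relations with Pol(Δ) = Pol({R}) one has pPol(Δ) ⊆ pPol({R}). -/

import Mathlib

/-- A Boolean relation of arity `k`: a set of `k`-tuples over `Bool`. -/
abbrev BRel (k : ℕ) := Set (Fin k → Bool)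

/-- A total `m`-ary Boolean operation `f` preserves a `k`-ary relation `R`. -/
def Preserves {m k : ℕ} (f : (Fin m → Bool) → Bool) (R : BRel k) : Prop :=
  ∀ ts : Fin m → Fin k → Bool, (∀ j, ts j ∈ R) → (fun i => f (fun j => ts j i)) ∈ R

/-- A partial `m`-ary Boolean operation (modelled with `Option Bool`; `none` =
undefined) preserves a `k`-ary relation `R`. -/
def PPreserves {m k : ℕ} (f : (Fin m → Bool) → Option Bool) (R : BRel k) : Prop :=
  ∀ ts : Fin m → Fin k → Bool, (∀ j, ts j ∈ R) →
    ∀ u : Fin k → Bool, (∀ i, f (fun j => ts j i) = some (u i)) → u ∈ R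

/-- The set of all (finitary, total) polymorphisms of a set of relations. -/
def Pol (Γ : Set (Σ k, BRel k)) : Set (Σ m, (Fin m → Bool) → Bool) :=
  { f | ∀ R ∈ Γ, Preserves f.2 R.2 }

/-- The set of all partial polymorphisms of a set of relations. -/
def pPol (Γ : Set (Σ k, BRel k)) : Set (Σ m, (Fin m → Bool) → Option Bool) :=
  { f | ∀ R ∈ Γ, PPreserves f.2 R.2 }

/-- `R` is a weak base of the co-clone it generates: every finite `Δ` with the
same polymorphisms as `R` satisfies `pPol Δ ⊆ pPol {R}`. -/
def IsWeakBase {k : ℕ} (R : BRel k) : Prop :=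
  ∀ Δ : Set (Σ k, BRel k), Δ.Finite →
    Pol Δ = Pol {⟨k, R⟩} → pPol Δ ⊆ pPol {⟨k, R⟩}

/-! Let `f ∈ pPol Δ` send tuples `ts j ∈ R` to `u`. If `σ` maps the Boolean `m'`-cube to the
coordinates of `R` so that `r ∘ σ ∈ Pol R` for every `r ∈ R`, then `u ∘ σ ∈ Pol R = Pol Δ` too:
for tuples `qs` of some `Q ∈ Δ`, reading each `ts j` at `σ` of the columns of `qs` gives tuples
of `Q`, and `f` maps these to the image of `qs` under `u ∘ σ`.

For `R = IS^n_00`, every polymorphism fixes the constants and (for `n ≥ 2`) is monotone, every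
monotone operation that fixes `0` and dominates a projection is a polymorphism, and "at least two
arguments are true" is not one. Three choices of `σ` (on the 1-, `n`- and 3-cube) then force
`u c₀ = 0`, `u c₁ = 1`, some `u xᵢ = 1`, and `u x → u xᵢ`. -/

section Transfer

variable {k : ℕ} {R : BRel k} {Δ : Set (Σ k, BRel k)}

theorem mem_pol_singleton_iff {m : ℕ} {g : (Fin m → Bool) → Bool} :
    (⟨m, g⟩ : Σ m, (Fin m → Bool) → Bool) ∈ Pol {⟨k, R⟩} ↔ Preserves g R := by
  simp [Pol]

theorem preserves_comp_of_mem_pPol (hpol : Pol Δ = Pol {⟨k, R⟩}) {m m' : ℕ}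
    {f : (Fin m → Bool) → Option Bool} (hf : ⟨m, f⟩ ∈ pPol Δ)
    {ts : Fin m → Fin k → Bool} (hts : ∀ j, ts j ∈ R) {u : Fin k → Bool}
    (hu : ∀ i, f (fun j => ts j i) = some (u i)) (σ : (Fin m' → Bool) → Fin k)
    (hσ : ∀ r ∈ R, Preserves (r ∘ σ) R) : Preserves (u ∘ σ) R := by
  rw [← mem_pol_singleton_iff, ← hpol]
  rintro ⟨kq, Q⟩ hQ qs hqs
  have hrows (j : Fin m) : (fun i => ts j (σ fun l => qs l i)) ∈ Q := by
    have : (⟨m', ts j ∘ σ⟩ : Σ m, (Fin m → Bool) → Bool) ∈ Pol Δ :=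
      hpol ▸ mem_pol_singleton_iff.mpr (hσ _ (hts j))
    exact this ⟨kq, Q⟩ hQ qs hqs
  exact hf ⟨kq, Q⟩ hQ _ hrows _ fun i => hu _

end Transfer

def atLeastTwo {m : ℕ} (x : Fin m → Bool) : Bool :=
  decide (∃ a b, a ≠ b ∧ x a = true ∧ x b = true)

theorem monotone_atLeastTwo {m : ℕ} : Monotone (atLeastTwo (m := m)) := by
  intro x y hxy
  simp only [Bool.le_iff_imp, atLeastTwo, decide_eq_true_eq]
  rintro ⟨a, b, hab, ha, hb⟩
  exact ⟨a, b, hab, Bool.le_iff_imp.mp (hxy a) ha, Bool.le_iff_imp.mp (hxy b) hb⟩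

namespace ISn00

variable {n : ℕ}

/-- `xs i` is the coordinate xᵢ₊₁ of the paper, `xImp` its coordinate x. -/
def xs (i : Fin n) : Fin (n + 3) := Fin.castAdd 3 i
def xImp : Fin (n + 3) := Fin.natAdd n 0
def c₀ : Fin (n + 3) := Fin.natAdd n 1
def c₁ : Fin (n + 3) := Fin.natAdd n 2

variable (n) in
def rel : BRel (n + 3) :=
  { t | (∃ i, t (xs i) = true) ∧ (t xImp = true → ∀ i, t (xs i) = true) ∧
    t c₀ = false ∧ t c₁ = true }

def tuple (a : Fin n → Bool) (b : Bool) : Fin (n + 3) → Bool := Fin.append a ![b, false, true]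

@[simp] theorem tuple_xs (a : Fin n → Bool) (b : Bool) (i : Fin n) : tuple a b (xs i) = a i :=
  Fin.append_left _ _ _
@[simp] theorem tuple_xImp (a : Fin n → Bool) (b : Bool) : tuple a b xImp = b :=
  Fin.append_right _ _ _
@[simp] theorem tuple_c₀ (a : Fin n → Bool) (b : Bool) : tuple a b c₀ = false :=
  Fin.append_right _ _ _
@[simp] theorem tuple_c₁ (a : Fin n → Bool) (b : Bool) : tuple a b c₁ = true :=
  Fin.append_right _ _ _

theorem tuple_mem_rel {a : Fin n → Bool} {b : Bool} :
    tuple a b ∈ rel n ↔ (∃ i, a i = true) ∧ (b = true → ∀ i, a i = true) := by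
  simp [rel]

theorem map_const_of_preserves (hn : 0 < n) {m : ℕ} {g : (Fin m → Bool) → Bool}
    (hg : Preserves g (rel n)) : g (fun _ => false) = false ∧ g (fun _ => true) = true := by
  have hmem : tuple (fun _ => true) false ∈ rel n :=
    tuple_mem_rel.mpr ⟨⟨⟨0, hn⟩, rfl⟩, by simp⟩
  obtain ⟨-, -, h₀, h₁⟩ := hg (fun _ => tuple (fun _ => true) false) fun _ => hmem
  simp only [tuple_c₀, tuple_c₁] at h₀ h₁
  exact ⟨h₀, h₁⟩

theorem preserves_of_monotone {m : ℕ} {h : (Fin m → Bool) → Bool} (hmono : Monotone h)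
    (h₀ : h (fun _ => false) = false) {ℓ : Fin m} (hℓ : ∀ x, x ℓ = true → h x = true) :
    Preserves h (rel n) := by
  intro ts hts
  obtain ⟨⟨i, hi⟩, -, -, -⟩ := hts ℓ
  refine ⟨⟨i, hℓ _ hi⟩, fun hx i => ?_, ?_, hℓ _ (hts ℓ).2.2.2⟩
  · exact Bool.le_iff_imp.mp (hmono fun j => Bool.le_iff_imp.mpr fun h => (hts j).2.1 h i) hx
  · simpa only [(hts _).2.2.1] using h₀

theorem monotone_of_preserves (hn : 2 ≤ n) {m : ℕ} {g : (Fin m → Bool) → Bool}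
    (hg : Preserves g (rel n)) : Monotone g := by
  obtain ⟨i₀, i₁, hne⟩ : ∃ i₀ i₁ : Fin n, i₀ ≠ i₁ :=
    ⟨⟨0, by omega⟩, ⟨1, by omega⟩, by simp [Fin.ext_iff]⟩
  intro x y hxy
  have hrow (j : Fin m) : tuple (Function.update (fun _ => true) i₀ (y j)) (x j) ∈ rel n := by
    refine tuple_mem_rel.mpr ⟨⟨i₁, by simp [hne.symm]⟩, fun hxj i => ?_⟩
    rcases eq_or_ne i i₀ with rfl | hi
    · simpa using Bool.le_iff_imp.mp (hxy j) hxj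
    · simp [hi]
  obtain ⟨-, himp, -, -⟩ := hg _ hrow
  refine Bool.le_iff_imp.mpr fun hgx => ?_
  simpa using himp (by simpa using hgx) i₀

def constCoord (x : Fin 1 → Bool) : Fin (n + 3) := if x 0 then c₁ else c₀

theorem preserves_comp_constCoord {r : Fin (n + 3) → Bool} (hr : r ∈ rel n) :
    Preserves (r ∘ constCoord) (rel n) := by
  obtain ⟨-, -, h₀, h₁⟩ := hr
  have hproj : r ∘ constCoord = fun x => x 0 :=
    funext fun x => by cases hx : x 0 <;> simp [constCoord, hx, h₀, h₁]
  exact hproj ▸ preserves_of_monotone (fun _ _ h => h 0) rfl fun _ hx => hx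

theorem constants_of_preserves_comp_constCoord (hn : 0 < n) {u : Fin (n + 3) → Bool}
    (h : Preserves (u ∘ constCoord) (rel n)) : u c₀ = false ∧ u c₁ = true := by
  simpa [constCoord] using map_const_of_preserves hn h

noncomputable def weightCoord (x : Fin n → Bool) : Fin (n + 3) :=
  if atLeastTwo x then c₁ else if h : ∃ i, x i = true then xs h.choose else c₀

theorem apply_weightCoord {v : Fin (n + 3) → Bool} (h₀ : v c₀ = false) (h₁ : v c₁ = true)
    (x : Fin n → Bool) :
    v (weightCoord x) = (atLeastTwo x || decide (∃ i, x i = true ∧ v (xs i) = true)) := by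
  unfold weightCoord
  split_ifs with hW hx
  · simp [hW, h₁]
  · have hunique (i : Fin n) (hi : x i = true) : i = hx.choose := by
      by_contra hne
      exact hW (by simpa [atLeastTwo] using ⟨i, _, hne, hi, hx.choose_spec⟩)
    have hiff : (∃ i, x i = true ∧ v (xs i) = true) ↔ v (xs hx.choose) = true :=
      ⟨fun ⟨i, hi, hv⟩ => hunique i hi ▸ hv, fun hv => ⟨_, hx.choose_spec, hv⟩⟩
    simp [hW, hiff]
  · push Not at hx
    simp [hW, h₀, hx]

theorem not_preserves_atLeastTwo : ¬ Preserves (atLeastTwo (m := n)) (rel n) := by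
  intro h
  have hrow (ℓ : Fin n) : tuple (fun i => decide (i = ℓ)) false ∈ rel n :=
    tuple_mem_rel.mpr ⟨⟨ℓ, by simp⟩, by simp⟩
  obtain ⟨⟨i, hi⟩, -⟩ := h _ hrow
  simp only [tuple_xs, atLeastTwo, decide_eq_true_eq] at hi
  obtain ⟨a, b, hab, rfl, rfl⟩ := hi
  exact hab rfl

theorem preserves_comp_weightCoord {r : Fin (n + 3) → Bool} (hr : r ∈ rel n) :
    Preserves (r ∘ weightCoord) (rel n) := by
  obtain ⟨⟨ℓ, hℓ⟩, -, h₀, h₁⟩ := hr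
  rw [show r ∘ weightCoord = _ from funext (apply_weightCoord h₀ h₁)]
  refine preserves_of_monotone (ℓ := ℓ) ?_ (by simp [atLeastTwo])
    fun x hx => by simpa using Or.inr ⟨ℓ, hx, hℓ⟩
  intro x y hxy
  simp only [Bool.le_iff_imp, Bool.or_eq_true, decide_eq_true_eq]
  rintro (hW | ⟨i, hi, hri⟩)
  · exact Or.inl (Bool.le_iff_imp.mp (monotone_atLeastTwo hxy) hW)
  · exact Or.inr ⟨i, Bool.le_iff_imp.mp (hxy i) hi, hri⟩

theorem exists_of_preserves_comp_weightCoord {u : Fin (n + 3) → Bool} (h₀ : u c₀ = false)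
    (h₁ : u c₁ = true) (h : Preserves (u ∘ weightCoord) (rel n)) :
    ∃ i, u (xs i) = true := by
  by_contra! hu
  have hW : u ∘ weightCoord = atLeastTwo :=
    funext fun x => by simp [apply_weightCoord h₀ h₁, hu]
  exact not_preserves_atLeastTwo (hW ▸ h)

def implCoord (i₀ : Fin n) (x : Fin 3 → Bool) : Fin (n + 3) :=
  if x 2 then c₁ else if x 0 then (if x 1 then xs i₀ else xImp) else c₀

theorem apply_implCoord {v : Fin (n + 3) → Bool} (h₀ : v c₀ = false) (h₁ : v c₁ = true)
    (i₀ : Fin n) (x : Fin 3 → Bool) :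
    v (implCoord i₀ x) = (x 2 || x 0 && if x 1 then v (xs i₀) else v xImp) := by
  unfold implCoord
  split_ifs <;> simp [*]

theorem monotone_or_and_ite {a b : Bool} (hba : b ≤ a) :
    Monotone fun x : Fin 3 → Bool => x 2 || x 0 && if x 1 then a else b := by
  intro x y hxy
  have h₀ := hxy 0
  have h₁ := hxy 1
  have h₂ := hxy 2
  dsimp only
  revert hba h₀ h₁ h₂
  generalize x 0 = x₀, x 1 = x₁, x 2 = x₂, y 0 = y₀, y 1 = y₁, y 2 = y₂
  revert a b x₀ x₁ x₂ y₀ y₁ y₂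
  decide

theorem preserves_comp_implCoord (i₀ : Fin n) {r : Fin (n + 3) → Bool} (hr : r ∈ rel n) :
    Preserves (r ∘ implCoord i₀) (rel n) := by
  obtain ⟨-, himp, h₀, h₁⟩ := hr
  rw [show r ∘ implCoord i₀ = _ from funext (apply_implCoord h₀ h₁ i₀)]
  exact preserves_of_monotone (ℓ := 2)
    (monotone_or_and_ite (Bool.le_iff_imp.mpr fun h => himp h i₀)) rfl fun x hx => by simp [hx]

theorem imp_of_preserves_comp_implCoord (hn : 2 ≤ n) {u : Fin (n + 3) → Bool}
    (h₀ : u c₀ = false) (h₁ : u c₁ = true) {i₀ : Fin n}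
    (h : Preserves (u ∘ implCoord i₀) (rel n)) (hx : u xImp = true) : u (xs i₀) = true := by
  have hle : ![true, false, false] ≤ ![true, true, false] := fun j => by fin_cases j <;> decide
  have := Bool.le_iff_imp.mp (monotone_of_preserves hn h hle)
  simpa [apply_implCoord h₀ h₁, hx] using this

end ISn00

theorem stmt4 (n : ℕ) (hn : 2 ≤ n) :
    IsWeakBase { t : Fin (n + 3) → Bool |
      (∃ i : Fin n, t (Fin.castLE (by omega) i) = true) ∧
      (t ⟨n, by omega⟩ = true → ∀ i : Fin n, t (Fin.castLE (by omega) i) = true) ∧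
      t ⟨n + 1, by omega⟩ = false ∧ t ⟨n + 2, by omega⟩ = true } := by
  change IsWeakBase (ISn00.rel n)
  intro Δ _ hpol ⟨m, f⟩ hf R hR ts hts u hu
  obtain rfl := Set.mem_singleton_iff.mp hR
  have key {m' : ℕ} (σ : (Fin m' → Bool) → Fin (n + 3)) :=
    preserves_comp_of_mem_pPol hpol hf hts hu σ
  obtain ⟨h₀, h₁⟩ := ISn00.constants_of_preserves_comp_constCoord (by omega)
    (key ISn00.constCoord fun _ => ISn00.preserves_comp_constCoord)
  refine ⟨ISn00.exists_of_preserves_comp_weightCoord h₀ h₁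
      (key ISn00.weightCoord fun _ => ISn00.preserves_comp_weightCoord),
    fun hx i₀ => ?_, h₀, h₁⟩
  exact ISn00.imp_of_preserves_comp_implCoord hn h₀ h₁
    (key (ISn00.implCoord i₀) fun _ => ISn00.preserves_comp_implCoord i₀) hx
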